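/- Let d ≥ 1 be an integer, let 0 < ε < 2^{−12d−9}, let σ ≥ ε^{−1} be a real number (note this forces σ ≥ d+1), and let v : ℤ^d → [0,1] be arbitrary. Let (R^{βγ}) be a family of complex coefficients, indexed by pairs of multi-indices (β,γ) with |β+γ| = 6 and Δ(β+γ) ≤ 1, satisfying |R^{βγ}| ≤ 1 and R^{βγ} = conj(R^{γβ}). Let q : ℝ → (ℤ^d → ℂ) be such that each coordinate t ↦ q_j(t) is differentiable, the curve t ↦ q(t) is continuous for the norm ⫴q⫴_σ = sup_{j∈ℤ^d} |q_j|(1+⟨j⟩)^σ, and q satisfies the equations of motion √−1 · q_j′(t) = v_j q_j(t) + |q_j(t)|² q_j(t) + ∑_{β,γ} R^{βγ} γ_j q(t)^β conj(q(t))^{γ−e_j} for all t ∈ ℝ and all j ∈ ℤ^d. If sup_{j∈ℤ^d} |q_j(0)|(1+|j|₁)^σ ≤ ε and q_0(0) = 0, then the stability time is exponentially long: for every real t with |t| < ε^{−3}·2^{ε^{−1}} and every j ∈ ℤ^d one has | |q_j(t)|² − |q_j(0)|² | < ε²(1+⟨j⟩)^{−3σ}. -/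

import Mathlib

open scoped BigOperators

noncomputable section

/-- ℓ¹ norm (as a natural number) of a lattice point in `ℤ^d`. -/
def norm1 {d : ℕ} (j : Fin d → ℤ) : ℕ := ∑ i, (j i).natAbs

/-- `⟨j⟩ = max(|j|₁, 1)`. -/
def jbra {d : ℕ} (j : Fin d → ℤ) : ℕ := max (norm1 j) 1

/-- ℓ¹-diameter of a finite set of lattice points. -/
def diam1 {d : ℕ} (S : Finset (Fin d → ℤ)) : ℕ :=
  (S ×ˢ S).sup fun p => norm1 (p.1 - p.2)

/-- Multi-indices on `ℤ^d`: finitely supported functions to `ℕ`. -/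
abbrev MIdx (d : ℕ) := (Fin d → ℤ) →₀ ℕ

/-- total weight `|m| = ∑ m_j` of a multi-index. -/
def wt {d : ℕ} (m : MIdx d) : ℕ := m.sum fun _ n => n

/-- `Δ(m)`: ℓ¹-diameter of the support of a multi-index. -/
def mdiam {d : ℕ} (m : MIdx d) : ℕ := diam1 m.support

/-- the monomial `q^β * conj(q)^γ`. -/
def mono {d : ℕ} (q : (Fin d → ℤ) → ℂ) (β γ : MIdx d) : ℂ :=
  (β.prod fun a n => q a ^ n) * (γ.prod fun a n => (starRingEnd ℂ) (q a) ^ n)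

/-- Index set of short-range degree-6 monomials. -/
abbrev PairIdx (d : ℕ) :=
  {p : MIdx d × MIdx d // wt (p.1 + p.2) = 6 ∧ mdiam (p.1 + p.2) ≤ 1}

/-!
Only the remainder `R` moves the actions `|q_k|²`, since the quadratic and quartic parts of `H`
are gauge invariant. As long as `|q_l| ≤ 2ε (1 + ⟨l⟩)^{-σ}`, every monomial of `∂R/∂conj(q_k)` lives
in the `ℓ¹` unit ball around `k` (there are at most `7^{4d+2}` of them), so
`|d|q_k|²/dt| ≲ ε⁶ max(⟨k⟩, 2)^{-6σ}`. Because `max(⟨k⟩, 2)²` exceeds `1 + ⟨k⟩` by the factor `4/3`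
and `σ ≥ ε⁻¹`, this gain of `(3/4)^{3σ}` beats the time `ε⁻³ 2^{1/ε}`: `|q_k|²` moves by at most
`ε² (1 + ⟨k⟩)^{-3σ} / 2`, which improves the bound to `3/2 ε (1 + ⟨k⟩)^{-σ}`. Continuity of `q` in
the weighted norm closes the bootstrap on the whole time interval.
-/

open Finset

variable {d : ℕ}

lemma natAbs_le_norm1 (v : Fin d → ℤ) (i : Fin d) : (v i).natAbs ≤ norm1 v :=
  single_le_sum (f := fun i => (v i).natAbs) (fun _ _ => Nat.zero_le _) (mem_univ i)

lemma natAbs_add_natAbs_le_norm1 (v : Fin d → ℤ) {i i' : Fin d} (h : i ≠ i') :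
    (v i).natAbs + (v i').natAbs ≤ norm1 v := by
  rw [← sum_pair (f := fun i => (v i).natAbs) h]
  exact sum_le_sum_of_subset (subset_univ _)

lemma norm1_add_le (a b : Fin d → ℤ) : norm1 (a + b) ≤ norm1 a + norm1 b := by
  rw [norm1, norm1, norm1, ← sum_add_distrib]
  exact sum_le_sum fun i _ => Int.natAbs_add_le _ _

lemma norm1_sub_comm (a b : Fin d → ℤ) : norm1 (a - b) = norm1 (b - a) := by
  rw [← neg_sub]
  simp only [norm1, Pi.neg_apply, Int.natAbs_neg]

lemma norm1_ne_zero {v : Fin d → ℤ} (hv : v ≠ 0) : norm1 v ≠ 0 := by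
  obtain ⟨i, hi⟩ := Function.ne_iff.mp hv
  have := natAbs_le_norm1 v i
  have := Int.natAbs_ne_zero.mpr hi
  omega

lemma jbra_eq_norm1 {v : Fin d → ℤ} (hv : v ≠ 0) : jbra v = norm1 v :=
  max_eq_left (Nat.one_le_iff_ne_zero.mpr (norm1_ne_zero hv))

lemma jbra_le_jbra_add_one {k l : Fin d → ℤ} (h : norm1 (l - k) ≤ 1) : jbra k ≤ jbra l + 1 := by
  have := norm1_add_le l (k - l)
  rw [add_sub_cancel, norm1_sub_comm] at this
  simp only [jbra]
  omega

lemma max_jbra_two_le {k l : Fin d → ℤ} (h : norm1 (l - k) ≤ 1) :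
    max (jbra k : ℝ) 2 ≤ 1 + jbra l := by
  have hk : (jbra k : ℝ) ≤ jbra l + 1 := by exact_mod_cast jbra_le_jbra_add_one h
  have hl : (1 : ℝ) ≤ jbra l := by exact_mod_cast le_max_right (norm1 l) 1
  exact max_le (by linarith) (by linarith)

lemma le_div_max_jbra_rpow {k l : Fin d → ℤ} {x c σ : ℝ} (hσ : 0 ≤ σ) (hx : 0 ≤ x)
    (hl : norm1 (l - k) ≤ 1) (h : x * (1 + (jbra l : ℝ)) ^ σ ≤ c) :
    x ≤ c / max (jbra k : ℝ) 2 ^ σ := by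
  rw [le_div_iff₀ (by positivity)]
  exact (mul_le_mul_of_nonneg_left (Real.rpow_le_rpow (by positivity) (max_jbra_two_le hl) hσ)
    hx).trans h

lemma eq_pi_single_of_norm1_le_one {v : Fin d → ℤ} (h : norm1 v ≤ 1) {i : Fin d} (hi : v i ≠ 0) :
    IsUnit (v i) ∧ v = Pi.single i (v i) := by
  have hvi : (v i).natAbs = 1 := by
    have := natAbs_le_norm1 v i
    have := Int.natAbs_ne_zero.mpr hi
    omega
  refine ⟨Int.isUnit_iff_natAbs_eq.mpr hvi, funext fun i' => ?_⟩
  rcases eq_or_ne i' i with rfl | hne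
  · simp
  · have := natAbs_add_natAbs_le_norm1 v hne.symm
    rw [Pi.single_eq_of_ne hne]
    omega

def unitBall (j : Fin d → ℤ) : Finset (Fin d → ℤ) :=
  insert j (univ.image fun p : Fin d × ℤˣ => j + Pi.single p.1 (p.2 : ℤ))

lemma card_unitBall_le (j : Fin d → ℤ) : #(unitBall j) ≤ 2 * d + 1 := by
  have := card_image_le (s := (univ : Finset (Fin d × ℤˣ)))
    (f := fun p => j + Pi.single p.1 (p.2 : ℤ))
  rw [card_univ, Fintype.card_prod, Fintype.card_fin, Fintype.card_units_int] at this
  exact (card_insert_le _ _).trans (by omega)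

lemma mem_unitBall_of_norm1_sub_le_one {j k : Fin d → ℤ} (h : norm1 (k - j) ≤ 1) :
    k ∈ unitBall j := by
  by_cases hkj : k - j = 0
  · simp [unitBall, sub_eq_zero.mp hkj]
  obtain ⟨i, hi⟩ := Function.ne_iff.mp hkj
  obtain ⟨⟨u, hu⟩, hsingle⟩ := eq_pi_single_of_norm1_le_one h hi
  refine mem_insert_of_mem (mem_image.mpr ⟨(i, u), mem_univ _, ?_⟩)
  simp only [hu, ← hsingle, add_sub_cancel]

lemma wt_add (β γ : MIdx d) : wt (β + γ) = wt β + wt γ :=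
  Finsupp.sum_add_index' (fun _ => rfl) (fun _ _ _ => rfl)

lemma apply_le_wt (m : MIdx d) (a : Fin d → ℤ) : m a ≤ wt m := by
  by_cases h : m a = 0
  · simp [h]
  · exact single_le_sum (f := fun x => m x) (fun _ _ => Nat.zero_le _)
      (Finsupp.mem_support_iff.mpr h)

lemma wt_sub_single_add_one {γ : MIdx d} {j : Fin d → ℤ} (h : 1 ≤ γ j) :
    wt (γ - Finsupp.single j 1) + 1 = wt γ := by
  have hwt : wt (Finsupp.single j 1 : MIdx d) = 1 := Finsupp.sum_single_index rfl
  nth_rw 2 [← hwt]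
  rw [← wt_add, tsub_add_cancel_of_le (Finsupp.single_le_iff.mpr h)]

lemma norm1_sub_le_mdiam {m : MIdx d} {a b : Fin d → ℤ}
    (ha : a ∈ m.support) (hb : b ∈ m.support) : norm1 (a - b) ≤ mdiam m :=
  le_sup (f := fun p : (Fin d → ℤ) × (Fin d → ℤ) => norm1 (p.1 - p.2)) (b := (a, b))
    (mem_product.mpr ⟨ha, hb⟩)

lemma norm_mono_le {Q : (Fin d → ℤ) → ℂ} {β γ : MIdx d} {B : ℝ} (hB : 0 ≤ B)
    (hQ : ∀ a ∈ β.support ∪ γ.support, ‖Q a‖ ≤ B) :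
    ‖mono Q β γ‖ ≤ B ^ (wt β + wt γ) := by
  have key : ∀ (m : MIdx d) (f : ℂ → ℂ), (∀ z, ‖f z‖ = ‖z‖) →
      (∀ a ∈ m.support, ‖Q a‖ ≤ B) → ‖m.prod fun a n => f (Q a) ^ n‖ ≤ B ^ wt m := by
    intro m f hf hm
    rw [Finsupp.prod, norm_prod, wt, Finsupp.sum, ← prod_pow_eq_pow_sum]
    refine prod_le_prod (fun _ _ => norm_nonneg _) fun a ha => ?_
    rw [norm_pow, hf]
    exact pow_le_pow_left₀ (norm_nonneg _) (hm a ha) _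
  rw [mono, norm_mul, pow_add]
  exact mul_le_mul (key β id (fun _ => rfl) fun a ha => hQ a (mem_union_left _ ha))
    (key γ _ Complex.norm_conj fun a ha => hQ a (mem_union_right _ ha))
    (norm_nonneg _) (pow_nonneg hB _)

/-- `∂R/∂conj(q_j)` evaluated at `Q`. -/
def remainderGrad (R : MIdx d → MIdx d → ℂ) (Q : (Fin d → ℤ) → ℂ) (j : Fin d → ℤ) : ℂ :=
  ∑' p : PairIdx d, R p.1.1 p.1.2 * (p.1.2 j : ℂ) * mono Q p.1.1 (p.1.2 - Finsupp.single j 1)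

section RemainderGrad

lemma PairIdx.apply_le_six (p : PairIdx d) (a : Fin d → ℤ) : p.1.1 a ≤ 6 ∧ p.1.2 a ≤ 6 := by
  have := p.2.1 ▸ apply_le_wt (p.1.1 + p.1.2) a
  rw [Finsupp.add_apply] at this
  omega

variable {p : PairIdx d} {j : Fin d → ℤ}

lemma PairIdx.norm1_sub_le_one (hj : p.1.2 j ≠ 0) {a : Fin d → ℤ}
    (ha : a ∈ (p.1.1 + p.1.2).support) : norm1 (a - j) ≤ 1 := by
  have hj' : j ∈ (p.1.1 + p.1.2).support := by
    rw [Finsupp.mem_support_iff, Finsupp.add_apply]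
    omega
  exact (norm1_sub_le_mdiam ha hj').trans p.2.2

def localMIdx (S : Finset (Fin d → ℤ)) : Finset (MIdx d) :=
  S.finsupp fun _ => range 7

def localPairs (j : Fin d → ℤ) : Finset (PairIdx d) :=
  (localMIdx (unitBall j) ×ˢ localMIdx (unitBall j)).subtype _

lemma mem_localPairs (hj : p.1.2 j ≠ 0) : p ∈ localPairs j := by
  have hsupp : (p.1.1 + p.1.2).support ⊆ unitBall j := fun a ha =>
    mem_unitBall_of_norm1_sub_le_one (p.norm1_sub_le_one hj ha)
  rw [Finsupp.support_add_eq_union, union_subset_iff] at hsupp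
  simp only [localPairs, mem_subtype, mem_product, localMIdx, mem_finsupp_iff, mem_range]
  exact ⟨⟨hsupp.1, fun a _ => by have := p.apply_le_six a; omega⟩,
    ⟨hsupp.2, fun a _ => by have := p.apply_le_six a; omega⟩⟩

lemma card_localPairs_le (j : Fin d → ℤ) : #(localPairs j) ≤ 7 ^ (4 * d + 2) := by
  have hcard : #(localMIdx (unitBall j)) = 7 ^ #(unitBall j) := by
    simp [localMIdx, card_finsupp]
  calc #(localPairs j)
      ≤ #(localMIdx (unitBall j)) * #(localMIdx (unitBall j)) := by
        rw [localPairs, card_subtype, ← card_product]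
        exact card_filter_le _ _
    _ = 7 ^ (#(unitBall j) + #(unitBall j)) := by rw [hcard, pow_add]
    _ ≤ 7 ^ (4 * d + 2) := by
        have := card_unitBall_le j
        exact Nat.pow_le_pow_right (by norm_num) (by omega)

variable {R : MIdx d → MIdx d → ℂ} {Q : (Fin d → ℤ) → ℂ} {B : ℝ}

lemma norm_remainderGrad_term_le (hR : ‖R p.1.1 p.1.2‖ ≤ 1) (hB : 0 ≤ B)
    (hQ : ∀ k, norm1 (k - j) ≤ 1 → ‖Q k‖ ≤ B) :
    ‖R p.1.1 p.1.2 * (p.1.2 j : ℂ) * mono Q p.1.1 (p.1.2 - Finsupp.single j 1)‖ ≤ 6 * B ^ 5 := by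
  by_cases hj : p.1.2 j = 0
  · simp only [hj, Nat.cast_zero, mul_zero, zero_mul, norm_zero]
    positivity
  have hwt : wt p.1.1 + wt (p.1.2 - Finsupp.single j 1) = 5 := by
    have := wt_sub_single_add_one (Nat.one_le_iff_ne_zero.mpr hj)
    have := p.2.1
    rw [wt_add] at this
    omega
  have hmono : ‖mono Q p.1.1 (p.1.2 - Finsupp.single j 1)‖ ≤ B ^ 5 := by
    refine hwt ▸ norm_mono_le hB fun a ha => hQ a (p.norm1_sub_le_one hj ?_)
    rw [Finsupp.support_add_eq_union]
    exact union_subset_union subset_rfl Finsupp.support_tsub ha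
  have hγ : (p.1.2 j : ℝ) ≤ 6 := by exact_mod_cast (p.apply_le_six j).2
  rw [norm_mul, norm_mul, Complex.norm_natCast]
  calc ‖R p.1.1 p.1.2‖ * (p.1.2 j : ℝ) * ‖mono Q p.1.1 (p.1.2 - Finsupp.single j 1)‖
      ≤ 1 * 6 * B ^ 5 := by gcongr
    _ = 6 * B ^ 5 := by ring

theorem norm_remainderGrad_le
    (hR : ∀ β γ : MIdx d, wt (β + γ) = 6 → mdiam (β + γ) ≤ 1 → ‖R β γ‖ ≤ 1) (hB : 0 ≤ B)
    (hQ : ∀ k, norm1 (k - j) ≤ 1 → ‖Q k‖ ≤ B) :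
    ‖remainderGrad R Q j‖ ≤ 6 * 7 ^ (4 * d + 2) * B ^ 5 := by
  rw [remainderGrad, tsum_eq_sum (s := localPairs j) fun p hp => ?vanish]
  case vanish =>
    have hj : p.1.2 j = 0 := by_contra fun hj => hp (mem_localPairs hj)
    simp [hj]
  calc _ ≤ ∑ p ∈ localPairs j, ‖R p.1.1 p.1.2 * (p.1.2 j : ℂ) *
          mono Q p.1.1 (p.1.2 - Finsupp.single j 1)‖ := norm_sum_le _ _
    _ ≤ #(localPairs j) • (6 * B ^ 5) :=
        sum_le_card_nsmul _ _ _ fun p _ => norm_remainderGrad_term_le (hR _ _ p.2.1 p.2.2) hB hQ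
    _ ≤ 7 ^ (4 * d + 2) * (6 * B ^ 5) := by
        rw [nsmul_eq_mul]
        gcongr
        exact_mod_cast card_localPairs_le j
    _ = 6 * 7 ^ (4 * d + 2) * B ^ 5 := by ring

end RemainderGrad

section Bootstrap

open Set Filter

lemma equicontinuous_norm_mul {ι E : Type*} [SeminormedAddCommGroup E] {F : ℝ → ι → E}
    {c : ι → ℝ} (hc : ∀ i, 0 ≤ c i)
    (hF : ∀ t₀ : ℝ, ∀ δ > (0 : ℝ), ∃ r > (0 : ℝ), ∀ t : ℝ, |t - t₀| < r →
      ∀ i, ‖F t i - F t₀ i‖ * c i ≤ δ) :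
    Equicontinuous fun i t => ‖F t i‖ * c i := by
  intro t₀
  rw [Metric.equicontinuousAt_iff]
  intro δ hδ
  obtain ⟨r, hr, h⟩ := hF t₀ (δ / 2) (by positivity)
  refine ⟨r, hr, fun t ht i => ?_⟩
  rw [Real.dist_eq] at ht ⊢
  calc |‖F t₀ i‖ * c i - ‖F t i‖ * c i| = |‖F t₀ i‖ - ‖F t i‖| * c i := by
        rw [← sub_mul, abs_mul, abs_of_nonneg (hc i)]
    _ ≤ ‖F t i - F t₀ i‖ * c i := by
        rw [norm_sub_rev]
        exact mul_le_mul_of_nonneg_right (abs_norm_sub_norm_le _ _) (hc i)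
    _ < δ := (h t ht i).trans_lt (half_lt_self hδ)

lemma forall_abs_le_of_forall_Icc {P : ℝ → Prop} {x : ℝ} (h : ∀ r ∈ Icc 0 x, P r ∧ P (-r)) :
    ∀ u, |u| ≤ x → P u := by
  intro u hu
  rcases le_total 0 u with hu0 | hu0
  · exact (h u ⟨hu0, (le_abs_self u).trans hu⟩).1
  · simpa using (h (-u) ⟨neg_nonneg.mpr hu0, (neg_le_abs u).trans hu⟩).2

theorem Equicontinuous.forall_le_of_bootstrap {ι : Type*} {g : ι → ℝ → ℝ}
    (hg : Equicontinuous g) {a b T : ℝ} (hab : a < b) (h0 : ∀ i, g i 0 ≤ a)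
    (himp : ∀ r ≤ T, (∀ u, |u| ≤ r → ∀ i, g i u ≤ b) → ∀ u, |u| ≤ r → ∀ i, g i u ≤ a) :
    ∀ u, |u| ≤ T → ∀ i, g i u ≤ a := by
  set S : Set ℝ := {r | ∀ i, g i r ≤ a ∧ g i (-r) ≤ a}
  have hS : Icc 0 T ⊆ S := by
    refine IsClosed.Icc_subset_of_forall_mem_nhdsGT_of_Icc_subset ?_ (by simp [S, h0]) ?_
    · simp only [S, ofPred_forall, ofPred_and]
      exact (isClosed_iInter fun i => (isClosed_le (hg.continuous i) continuous_const).inter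
        (isClosed_le ((hg.continuous i).comp continuous_neg) continuous_const)).inter isClosed_Icc
    intro x ⟨hx0, hxT⟩ hxS
    have hprev : ∀ u, |u| ≤ x → ∀ i, g i u ≤ a :=
      forall_abs_le_of_forall_Icc fun r hr => forall_and.mp (hxS hr)
    obtain ⟨ρ₁, hρ₁, h₁⟩ := Metric.equicontinuousAt_iff.mp (hg x) (b - a) (by linarith)
    obtain ⟨ρ₂, hρ₂, h₂⟩ := Metric.equicontinuousAt_iff.mp (hg (-x)) (b - a) (by linarith)
    refine mem_of_superset (Ioo_mem_nhdsGT (lt_min (lt_min (by linarith : x < x + ρ₁)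
      (by linarith : x < x + ρ₂)) hxT)) fun r ⟨hxr, hr⟩ => ?_
    simp only [lt_min_iff] at hr
    have hbound : ∀ u, |u| ≤ r → ∀ i, g i u ≤ b := by
      intro u hu i
      rcases le_or_gt |u| x with hux | hux
      · exact (hprev u hux i).trans hab.le
      rcases abs_choice u with h | h
      · have := h₁ u (by rw [Real.dist_eq, abs_lt]; constructor <;> linarith) i
        rw [Real.dist_eq, abs_lt] at this
        linarith [hprev x (by rw [abs_of_nonneg hx0]) i]
      · have := h₂ u (by rw [Real.dist_eq, abs_lt]; constructor <;> linarith) i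
        rw [Real.dist_eq, abs_lt] at this
        linarith [hprev (-x) (by rw [abs_neg, abs_of_nonneg hx0]) i]
    have := himp r hr.2.le hbound
    exact fun i => ⟨this r (le_of_eq (abs_of_pos (by linarith))) i,
      this (-r) (le_of_eq (by rw [abs_neg, abs_of_pos (by linarith)])) i⟩
  exact forall_abs_le_of_forall_Icc fun r hr => forall_and.mp (hS hr)

end Bootstrap

section Dynamics

open Complex ComplexConjugate

lemma HasDerivAt.norm_sq_of_I_mul {f : ℝ → ℂ} {f' S : ℂ} {t a : ℝ} (hf : HasDerivAt f f' t)
    (h : I * f' = a * f t + S) :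
    HasDerivAt (fun s => ‖f s‖ ^ 2) (2 * (S * conj (f t)).im) t := by
  have hf' : f' = -I * (a * f t + S) := by
    rw [← h, ← mul_assoc, neg_mul, I_mul_I, neg_neg, one_mul]
  convert hf.norm_sq using 2
  rw [Complex.inner, hf']
  simp only [mul_re, mul_im, add_re, add_im, neg_re, neg_im, I_re, I_im, ofReal_re, ofReal_im,
    conj_re, conj_im]
  ring

variable {R : MIdx d → MIdx d → ℂ} {q q' : ℝ → (Fin d → ℤ) → ℂ} {v : (Fin d → ℤ) → ℝ}

theorem abs_norm_sq_sub_le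
    (hR : ∀ β γ : MIdx d, wt (β + γ) = 6 → mdiam (β + γ) ≤ 1 → ‖R β γ‖ ≤ 1)
    (hderiv : ∀ (t : ℝ) (j : Fin d → ℤ), HasDerivAt (fun s => q s j) (q' t j) t)
    (hode : ∀ (t : ℝ) (j : Fin d → ℤ),
      I * q' t j = (v j : ℂ) * q t j + ((‖q t j‖ ^ 2 : ℝ) : ℂ) * q t j + remainderGrad R (q t) j)
    {k : Fin d → ℤ} {r B : ℝ} (hB : 0 ≤ B)
    (hq : ∀ u, |u| ≤ r → ∀ l, norm1 (l - k) ≤ 1 → ‖q u l‖ ≤ B) {s : ℝ} (hs : |s| ≤ r) :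
    |‖q s k‖ ^ 2 - ‖q 0 k‖ ^ 2| ≤ 12 * 7 ^ (4 * d + 2) * B ^ 6 * |s| := by
  have hball : ∀ u, |u| ≤ r → u ∈ Metric.closedBall (0 : ℝ) r := by simp
  have hderiv_sq : ∀ u, HasDerivAt (fun s => ‖q s k‖ ^ 2)
      (2 * (remainderGrad R (q u) k * conj (q u k)).im) u := fun u =>
    (hderiv u k).norm_sq_of_I_mul (a := v k + ‖q u k‖ ^ 2) (by rw [hode]; push_cast; ring)
  have hbound : ∀ u, |u| ≤ r →
      ‖2 * (remainderGrad R (q u) k * conj (q u k)).im‖ ≤ 12 * 7 ^ (4 * d + 2) * B ^ 6 := by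
    intro u hu
    have hqk : ‖q u k‖ ≤ B := hq u hu k (by simp [norm1])
    calc ‖2 * (remainderGrad R (q u) k * conj (q u k)).im‖
        ≤ 2 * (‖remainderGrad R (q u) k‖ * ‖q u k‖) := by
          rw [norm_mul, Real.norm_two, Real.norm_eq_abs, ← norm_conj (q u k), ← norm_mul]
          gcongr
          exact abs_im_le_norm _
      _ ≤ 2 * (6 * 7 ^ (4 * d + 2) * B ^ 5 * B) := by
          gcongr
          exact norm_remainderGrad_le hR hB (hq u hu)
      _ = 12 * 7 ^ (4 * d + 2) * B ^ 6 := by ring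
  have := (convex_closedBall (0 : ℝ) r).norm_image_sub_le_of_norm_hasDerivWithin_le
    (fun u _ => (hderiv_sq u).hasDerivWithinAt)
    (fun u hu => hbound u (by simpa using hu)) (hball 0 (by simpa using (abs_nonneg s).trans hs))
    (hball s hs)
  simpa only [Real.norm_eq_abs, sub_zero] using this

end Dynamics

section Numerics

lemma le_sigma_and_le_one_of_lt_two_zpow {σ ε : ℝ} (hε0 : 0 < ε)
    (hε1 : ε < (2 : ℝ) ^ (-(12 * (d : ℤ)) - 9)) (hσ : ε⁻¹ ≤ σ) : 60 * (d : ℝ) + 85 ≤ σ ∧ ε ≤ 1 := by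
  have hpow : (2 : ℝ) ^ (-(12 * (d : ℤ)) - 9) = ((2 : ℝ) ^ (12 * d + 9))⁻¹ := by
    rw [← zpow_natCast, ← zpow_neg]
    push_cast
    ring_nf
  rw [hpow] at hε1
  have hinv : (2 : ℝ) ^ (12 * d + 9) ≤ ε⁻¹ := by
    simpa using inv_anti₀ hε0 hε1.le
  have hnat : 60 * d + 85 ≤ 2 ^ (12 * d + 9) := by
    have : 12 * d < 2 ^ (12 * d) := Nat.lt_two_pow_self
    rw [pow_add]
    omega
  constructor
  · calc 60 * (d : ℝ) + 85 ≤ (2 : ℝ) ^ (12 * d + 9) := by exact_mod_cast hnat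
      _ ≤ σ := hinv.trans hσ
  · exact hε1.le.trans (inv_le_one_of_one_le₀ (one_le_pow₀ one_le_two))

lemma mul_seven_pow_le_rpow {σ : ℝ} (hσ : 60 * (d : ℝ) + 85 ≤ σ) :
    1536 * (7 : ℝ) ^ (4 * d + 2) ≤ (32 / 27 : ℝ) ^ σ :=
  calc 1536 * (7 : ℝ) ^ (4 * d + 2) ≤ 2048 * 8 ^ (4 * d + 2) := by gcongr <;> norm_num
    _ = (2 : ℝ) ^ ((12 * d + 17 : ℕ) : ℝ) := by
        rw [Real.rpow_natCast, show (8 : ℝ) = 2 ^ 3 by norm_num,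
          show (2048 : ℝ) = 2 ^ 11 by norm_num, ← pow_mul, ← pow_add]
        ring_nf
    _ ≤ (2 : ℝ) ^ (σ / 5) := by
        apply Real.rpow_le_rpow_of_exponent_le one_le_two
        push_cast
        linarith
    _ ≤ ((32 / 27 : ℝ) ^ (5 : ℝ)) ^ (σ / 5) := by
        refine Real.rpow_le_rpow zero_le_two ?_ (by linarith)
        norm_num
    _ = (32 / 27 : ℝ) ^ σ := by
        rw [← Real.rpow_mul (by norm_num)]
        ring_nf

lemma one_add_pow_three_le {n : ℝ} (hn : 1 ≤ n) : 64 / 27 * (1 + n) ^ 3 ≤ max n 2 ^ 6 := by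
  have hM : 4 * (1 + n) ≤ 3 * max n 2 ^ 2 := by
    nlinarith [le_max_left n 2, le_max_right n 2]
  have := pow_le_pow_left₀ (by positivity) hM 3
  nlinarith

lemma rpow_neg_three_mul {x : ℝ} (hx : 0 ≤ x) (σ : ℝ) : x ^ (-(3 * σ)) = ((x ^ σ) ^ 3)⁻¹ := by
  rw [Real.rpow_neg hx, Real.rpow_pow_comm hx, ← Real.rpow_natCast, ← Real.rpow_mul hx]
  norm_num

lemma drift_bound_le {σ ε n s : ℝ} (hε0 : 0 < ε) (hε1 : ε ≤ 1) (hσ : ε⁻¹ ≤ σ)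
    (hK : 1536 * (7 : ℝ) ^ (4 * d + 2) ≤ (32 / 27 : ℝ) ^ σ) (hn : 1 ≤ n)
    (hs : |s| ≤ ε ^ (-3 : ℤ) * (2 : ℝ) ^ ε⁻¹) :
    12 * 7 ^ (4 * d + 2) * (2 * ε / max n 2 ^ σ) ^ 6 * |s| ≤ ε ^ 2 / 2 * (1 + n) ^ (-(3 * σ)) := by
  have hσ0 : 0 ≤ σ := (inv_pos.mpr hε0).le.trans hσ
  have hM : 0 < max n 2 := lt_max_of_lt_right two_pos
  set N : ℝ := 7 ^ (4 * d + 2)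
  set X : ℝ := (32 / 27 : ℝ) ^ σ
  set Y : ℝ := (1 + n) ^ σ
  have hY : 0 < Y := by positivity
  have hZ : 2 ^ σ * X * Y ^ 3 ≤ (max n 2 ^ σ) ^ 6 := by
    rw [Real.rpow_pow_comm hM.le, Real.rpow_pow_comm (by linarith),
      ← Real.mul_rpow (by norm_num) (by norm_num), ← Real.mul_rpow (by norm_num) (by positivity)]
    refine Real.rpow_le_rpow (by positivity) ?_ hσ0
    linarith [one_add_pow_three_le hn]
  have htime : |s| ≤ ε ^ (-3 : ℤ) * 2 ^ σ :=
    hs.trans (by gcongr; exact one_le_two)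
  rw [rpow_neg_three_mul (by linarith)]
  calc 12 * N * (2 * ε / max n 2 ^ σ) ^ 6 * |s|
      = 768 * N * ε ^ 6 * |s| / (max n 2 ^ σ) ^ 6 := by rw [div_pow]; ring
    _ ≤ 768 * N * ε ^ 6 * (ε ^ (-3 : ℤ) * 2 ^ σ) / (2 ^ σ * X * Y ^ 3) := by
        gcongr
    _ = 768 * N * ε / X * ε ^ 2 * (Y ^ 3)⁻¹ := by
        rw [zpow_neg, zpow_ofNat]
        field_simp
    _ ≤ 1 / 2 * ε ^ 2 * (Y ^ 3)⁻¹ := by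
        have hsmall : 768 * N * ε / X ≤ 1 / 2 := by
          have hN : 0 ≤ N := by positivity
          rw [div_le_iff₀ (by positivity)]
          nlinarith [mul_le_mul_of_nonneg_left hε1 hN]
        exact mul_le_mul_of_nonneg_right (mul_le_mul_of_nonneg_right hsmall (by positivity))
          (by positivity)
    _ = ε ^ 2 / 2 * (Y ^ 3)⁻¹ := by ring

lemma mul_rpow_le_of_abs_sq_sub_sq_le {x y ρ σ ε : ℝ} (hρ : 1 ≤ ρ) (hσ : 0 ≤ σ) (hx0 : 0 ≤ x)
    (hy0 : 0 ≤ y) (hx : x * ρ ^ σ ≤ ε) (h : |y ^ 2 - x ^ 2| ≤ ε ^ 2 / 2 * ρ ^ (-(3 * σ))) :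
    y * ρ ^ σ ≤ 3 / 2 * ε := by
  rw [rpow_neg_three_mul (by linarith)] at h
  set W := ρ ^ σ
  have hW : 1 ≤ W := Real.one_le_rpow hρ hσ
  have hε : 0 ≤ ε := le_trans (by positivity) hx
  have hdecay : (W ^ 3)⁻¹ * W ^ 2 ≤ 1 := by
    rw [inv_mul_le_iff₀ (by positivity), mul_one]
    exact pow_le_pow_right₀ hW (by norm_num)
  have hsq : (y * W) ^ 2 ≤ (3 / 2 * ε) ^ 2 := by
    have := (abs_le.mp h).2
    have := pow_le_pow_left₀ (by positivity) hx 2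
    nlinarith
  exact (pow_le_pow_iff_left₀ (by positivity) (by positivity) two_ne_zero).mp hsq

end Numerics

theorem stability_short_range_oscillators_exponential_general
    (d : ℕ) (σ ε : ℝ)
    (hε0 : 0 < ε) (hε1 : ε < (2 : ℝ) ^ (-(12 * (d : ℤ)) - 9))
    (hσ : ε⁻¹ ≤ σ)
    (v : (Fin d → ℤ) → ℝ)
    (R : MIdx d → MIdx d → ℂ)
    (hRbd : ∀ β γ : MIdx d, wt (β + γ) = 6 → mdiam (β + γ) ≤ 1 →
      ‖R β γ‖ ≤ 1)
    (q q' : ℝ → (Fin d → ℤ) → ℂ)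
    (hderiv : ∀ (t : ℝ) (j : Fin d → ℤ), HasDerivAt (fun s => q s j) (q' t j) t)
    (hcont : ∀ t₀ : ℝ, ∀ δ > (0 : ℝ), ∃ r > (0 : ℝ), ∀ t : ℝ, |t - t₀| < r →
      ∀ j, ‖q t j - q t₀ j‖ * (1 + (jbra j : ℝ)) ^ σ ≤ δ)
    (hode : ∀ (t : ℝ) (j : Fin d → ℤ),
      Complex.I * q' t j =
        (v j : ℂ) * q t j + ((‖q t j‖ ^ 2 : ℝ) : ℂ) * q t j +
          ∑' p : PairIdx d,
            R p.1.1 p.1.2 * (p.1.2 j : ℂ) *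
              mono (q t) p.1.1 (p.1.2 - Finsupp.single j 1))
    (hinit : ∀ j, ‖q 0 j‖ * (1 + (norm1 j : ℝ)) ^ σ ≤ ε)
    (hzero : q 0 0 = 0) :
    ∀ t : ℝ, |t| < ε ^ (-3 : ℤ) * (2 : ℝ) ^ ε⁻¹ →
      ∀ j : Fin d → ℤ,
        |‖q t j‖ ^ 2 - ‖q 0 j‖ ^ 2|
          < ε ^ 2 * (1 + (jbra j : ℝ)) ^ (-(3 * σ)) := by
  intro t ht j
  obtain ⟨hσd, hεle⟩ := le_sigma_and_le_one_of_lt_two_zpow hε0 hε1 hσ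
  have hσ0 : 0 ≤ σ := le_trans (by positivity) hσd
  have hdrift : ∀ r ≤ |t|, (∀ u, |u| ≤ r → ∀ l, ‖q u l‖ * (1 + (jbra l : ℝ)) ^ σ ≤ 2 * ε) →
      ∀ s, |s| ≤ r → ∀ k,
        |‖q s k‖ ^ 2 - ‖q 0 k‖ ^ 2| ≤ ε ^ 2 / 2 * (1 + (jbra k : ℝ)) ^ (-(3 * σ)) := by
    intro r hr hboot s hs k
    refine (abs_norm_sq_sub_le hRbd hderiv hode (by positivity)
      (fun u hu l hl => le_div_max_jbra_rpow hσ0 (norm_nonneg _) hl (hboot u hu l)) hs).trans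
      (drift_bound_le hε0 hεle hσ (mul_seven_pow_le_rpow hσd)
        (by exact_mod_cast le_max_right _ _) ((hs.trans hr).trans ht.le))
  have hinit' : ∀ k, ‖q 0 k‖ * (1 + (jbra k : ℝ)) ^ σ ≤ ε := by
    intro k
    rcases eq_or_ne k 0 with rfl | hk
    · simpa [hzero] using hε0.le
    · simpa [jbra_eq_norm1 hk] using hinit k
  have hboot := (equicontinuous_norm_mul (fun k => by positivity) hcont).forall_le_of_bootstrap
    (by linarith : 3 / 2 * ε < 2 * ε) (fun k => (hinit' k).trans (by linarith))
    fun r hr hb s hs k => mul_rpow_le_of_abs_sq_sub_sq_le (by simp) hσ0 (norm_nonneg _)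
      (norm_nonneg _) (hinit' k) (hdrift r hr hb s hs k)
  have hfinal := hdrift |t| le_rfl (fun u hu l => (hboot u hu l).trans (by linarith)) t le_rfl j
  have hpos : 0 < ε ^ 2 * (1 + (jbra j : ℝ)) ^ (-(3 * σ)) := by positivity
  linarith

/-- Theorem 2 of the paper, exponential-time form.
Under the same assumptions as the polynomial-time statement but with `σ ≥ ε⁻¹`
(which forces `σ ≥ d+1`), the localization estimate holds for the exponentially
long time scale `|t| < ε^{-3} · 2^{ε⁻¹}`. -/
theorem stability_short_range_oscillators_exponential
    (d : ℕ) (hd : 1 ≤ d) (σ ε : ℝ)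
    (hε0 : 0 < ε) (hε1 : ε < (2 : ℝ) ^ (-(12 * (d : ℤ)) - 9))
    (hσ : ε⁻¹ ≤ σ)
    (v : (Fin d → ℤ) → ℝ) (hv : ∀ j, v j ∈ Set.Icc (0 : ℝ) 1)
    (R : MIdx d → MIdx d → ℂ)
    (hRbd : ∀ β γ : MIdx d, wt (β + γ) = 6 → mdiam (β + γ) ≤ 1 →
      ‖R β γ‖ ≤ 1)
    (hRsym : ∀ β γ : MIdx d, wt (β + γ) = 6 → mdiam (β + γ) ≤ 1 →
      R β γ = (starRingEnd ℂ) (R γ β))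
    (q q' : ℝ → (Fin d → ℤ) → ℂ)
    (hderiv : ∀ (t : ℝ) (j : Fin d → ℤ), HasDerivAt (fun s => q s j) (q' t j) t)
    (hcont : ∀ t₀ : ℝ, ∀ δ > (0 : ℝ), ∃ r > (0 : ℝ), ∀ t : ℝ, |t - t₀| < r →
      ∀ j, ‖q t j - q t₀ j‖ * (1 + (jbra j : ℝ)) ^ σ ≤ δ)
    (hode : ∀ (t : ℝ) (j : Fin d → ℤ),
      Complex.I * q' t j =
        (v j : ℂ) * q t j + ((‖q t j‖ ^ 2 : ℝ) : ℂ) * q t j +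
          ∑' p : PairIdx d,
            R p.1.1 p.1.2 * (p.1.2 j : ℂ) *
              mono (q t) p.1.1 (p.1.2 - Finsupp.single j 1))
    (hinit : ∀ j, ‖q 0 j‖ * (1 + (norm1 j : ℝ)) ^ σ ≤ ε)
    (hzero : q 0 0 = 0) :
    ∀ t : ℝ, |t| < ε ^ (-3 : ℤ) * (2 : ℝ) ^ ε⁻¹ →
      ∀ j : Fin d → ℤ,
        |‖q t j‖ ^ 2 - ‖q 0 j‖ ^ 2|
          < ε ^ 2 * (1 + (jbra j : ℝ)) ^ (-(3 * σ)) :=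
  stability_short_range_oscillators_exponential_general d σ ε hε0 hε1 hσ v R hRbd q q' hderiv hcont
    hode hinit hzero
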